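/- arXiv:2003.10832 — 2 statements merged into one kernel-verified Lean document; each statement's English description precedes it below -/
import Mathlib

section
/- Let 2 ≤ p < ∞ and 2 ≤ q < ∞. Then S := sin_{p,q} satisfies S'(x)² − S''(x)·S(x) ≥ 1 for all x ∈ [0, π_{p,q}) with x ≠ π_{p,q}/2. -/
open Real Set

/-- `F_{p,q}(x) = ∫₀ˣ (1 - t^q)^{-1/p} dt`. -/
noncomputable def genF (p q : ℝ) (x : ℝ) : ℝ :=
  ∫ t in (0:ℝ)..x, (1 - t ^ q) ^ (-(1 / p))

/-- The generalized π: `π_{p,q} = 2 F_{p,q}(1)`. -/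
noncomputable def genPi (p q : ℝ) : ℝ := 2 * genF p q 1

/-- The inverse function of `F_{p,q} : [0,1] → [0, π_{p,q}/2]`;
for `x ∈ [0, π_{p,q}/2]` this is exactly `F_{p,q}⁻¹(x)` since `F_{p,q}`
is a continuous strictly increasing bijection of `[0,1]` onto `[0, π_{p,q}/2]`. -/
noncomputable def sinBase (p q : ℝ) (x : ℝ) : ℝ :=
  sSup {s : ℝ | s ∈ Icc (0:ℝ) 1 ∧ genF p q s ≤ x}

/-- `sin_{p,q}` on `[0, π_{p,q}]`: equals `F_{p,q}⁻¹` on `[0, π_{p,q}/2]` and is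
extended to `(π_{p,q}/2, π_{p,q}]` by `sin_{p,q}(π_{p,q} - x)`. -/
noncomputable def sinHalf (p q : ℝ) (x : ℝ) : ℝ :=
  if x ≤ genPi p q / 2 then sinBase p q x else sinBase p q (genPi p q - x)

/-- `sin_{p,q}` on all of `ℝ`: the odd `2π_{p,q}`-periodic continuation. -/
noncomputable def genSin (p q : ℝ) (x : ℝ) : ℝ :=
  let a := genPi p q
  let y := x - 2 * a * (⌊x / (2 * a)⌋ : ℝ)
  if y ≤ a then sinHalf p q y else -(sinHalf p q (2 * a - y))

/-- `cos_{p,q} x = (sin_{p,q} x)'`. -/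
noncomputable def genCos (p q : ℝ) (x : ℝ) : ℝ := deriv (genSin p q) x

/-! On `[0, π_{p,q}/2)` the function `S = sin_{p,q}` is the inverse of `F_{p,q}`, so
`S' = (1 - S^q)^{1/p}` and `S'' = -(q/p) S^{q-1} (1 - S^q)^{2/p - 1}`. With `v = 1 - S^q` the
quantity `S'^2 - S'' S` equals `v^{2/p-1} (v + (q/p)(1 - v))`, which is at least
`v^{2/p-1} ((1 - 2/p) v + 2/p) ≥ 1` by `q ≥ 2` and Bernoulli's inequality
`v^{1-2/p} ≤ (1 - 2/p) v + 2/p`. The reflection `S(x) = S(π_{p,q} - x)` carries this over to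
`(π_{p,q}/2, π_{p,q})`, and at `x = 0` the quantity is `S'(0)^2 = 1` because `S(0) = 0`. -/

open MeasureTheory Topology Filter

theorem HasDerivWithinAt.of_local_left_inverse {𝕜 : Type*} [NontriviallyNormedField 𝕜]
    {f g : 𝕜 → 𝕜} {f' a : 𝕜} {s t : Set 𝕜} (hg : Tendsto g (𝓝[s] a) (𝓝[t] (g a)))
    (hf : HasDerivWithinAt f f' t (g a)) (hf' : f' ≠ 0) (ha : a ∈ s)
    (hfg : ∀ᶠ y in 𝓝[s] a, f (g y) = y) : HasDerivWithinAt g f'⁻¹ s a :=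
  HasFDerivWithinAt.of_local_left_inverse
    (f' := ContinuousLinearEquiv.unitsEquivAut 𝕜 (Units.mk0 f' hf')) hg hf ha hfg

theorem HasDerivWithinAt.comp_neg {f : ℝ → ℝ} {f' x : ℝ} {s : Set ℝ}
    (hf : HasDerivWithinAt f f' s (-x)) : HasDerivWithinAt (fun y => f (-y)) (-f') (-s) x := by
  have h := hf.comp (h := fun y : ℝ => -y) x (hasDerivAt_neg x).hasDerivWithinAt
    fun _ hy => hy
  rwa [mul_neg_one] at h

theorem HasDerivWithinAt.hasDerivAt_sub_comp_neg {f : ℝ → ℝ} {a b : ℝ}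
    (hr : HasDerivWithinAt f a (Ici 0) 0) (hl : HasDerivWithinAt f b (Iic 0) 0) :
    HasDerivAt (fun y => f y - f (-y)) (a + b) 0 := by
  have hl_neg := HasDerivWithinAt.comp_neg (x := 0) (s := Iic 0) (by rwa [neg_zero])
  have hr_neg := HasDerivWithinAt.comp_neg (x := 0) (s := Ici 0) (by rwa [neg_zero])
  rw [neg_Iic, neg_zero] at hl_neg
  rw [neg_Ici, neg_zero] at hr_neg
  have hright := hr.fun_sub hl_neg
  have hleft := hl.fun_sub hr_neg
  rw [sub_neg_eq_add] at hright
  rw [sub_neg_eq_add, add_comm] at hleft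
  simpa [Iic_union_Ici] using hleft.union hright

theorem deriv_deriv_comp_const_sub (f : ℝ → ℝ) (a x : ℝ) :
    deriv (deriv fun y => f (a - y)) x = deriv (deriv f) (a - x) := by
  have h : deriv (fun y => f (a - y)) = fun y => -deriv f (a - y) :=
    funext fun y => deriv_comp_const_sub f a y
  rw [h, deriv.fun_neg, deriv_comp_const_sub, neg_neg]

section Integrand

variable {p q : ℝ}

theorem one_sub_rpow_pos (hq : 0 < q) {t : ℝ} (ht : |t| < 1) : 0 < 1 - t ^ q := by
  have : |t| ^ q < 1 := Real.rpow_lt_one (abs_nonneg t) ht hq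
  linarith [le_abs_self (t ^ q), Real.abs_rpow_le_abs_rpow t q]

theorem continuousOn_genF_integrand (hq : 0 < q) :
    ContinuousOn (fun t : ℝ => (1 - t ^ q) ^ (-(1 / p))) (Ioo (-1) 1) := fun t ht =>
  have ht' : |t| < 1 := abs_lt.2 ht
  ((continuousAt_const.sub (Real.continuousAt_rpow_const t q (Or.inr hq.le))).rpow_const
    (Or.inl (one_sub_rpow_pos hq ht').ne')).continuousWithinAt

theorem intervalIntegrable_genF_integrand (hp : 1 < p) (hq : 1 ≤ q) :
    IntervalIntegrable (fun t : ℝ => (1 - t ^ q) ^ (-(1 / p))) volume 0 1 := by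
  have hexp : -1 < -(1 / p) := by
    rw [neg_lt_neg_iff, div_lt_one (by linarith)]; exact hp
  have hdom : IntervalIntegrable (fun t : ℝ => (1 - t) ^ (-(1 / p))) volume 0 1 := by
    have h := intervalIntegral.intervalIntegrable_rpow' (a := 0) (b := 1) hexp
    simpa using (h.comp_sub_left 1).symm
  refine hdom.mono_fun
    (by fun_prop : Measurable fun t : ℝ => (1 - t ^ q) ^ (-(1 / p))).aestronglyMeasurable ?_
  rw [uIoc_of_le zero_le_one]
  refine ae_restrict_of_forall_mem measurableSet_Ioc fun t ⟨ht0, ht1⟩ => ?_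
  obtain rfl | ht1 := ht1.eq_or_lt
  · simp
  have hqt : t ^ q ≤ t := by
    simpa using Real.rpow_le_rpow_of_exponent_ge ht0 ht1.le hq
  have hpos : 0 < 1 - t ^ q := by linarith
  dsimp only
  rw [Real.norm_of_nonneg (Real.rpow_nonneg hpos.le _),
    Real.norm_of_nonneg (Real.rpow_nonneg (by linarith) _)]
  exact Real.rpow_le_rpow_of_nonpos (by linarith) (by linarith) (neg_nonpos.2 (by positivity))

end Integrand

section GenF

variable {p q : ℝ}

@[simp]
theorem genF_zero (p q : ℝ) : genF p q 0 = 0 := intervalIntegral.integral_same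

theorem hasDerivAt_genF (hq : 0 < q) {s : ℝ} (hs : s ∈ Ioo (-1) 1) :
    HasDerivAt (genF p q) ((1 - s ^ q) ^ (-(1 / p))) s := by
  have hcont := continuousOn_genF_integrand (p := p) hq
  have hsub : uIcc 0 s ⊆ Ioo (-1) 1 := ordConnected_Ioo.uIcc_subset (by norm_num) hs
  exact intervalIntegral.integral_hasDerivAt_right (hcont.mono hsub).intervalIntegrable
    (hcont.stronglyMeasurableAtFilter isOpen_Ioo s hs) (hcont.continuousAt (isOpen_Ioo.mem_nhds hs))

theorem continuousOn_genF (hp : 1 < p) (hq : 1 ≤ q) : ContinuousOn (genF p q) (Icc 0 1) := by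
  have h := intervalIntegral.continuousOn_primitive_interval'
    (intervalIntegrable_genF_integrand hp hq) (left_mem_uIcc (a := (0:ℝ)) (b := 1))
  rwa [uIcc_of_le zero_le_one] at h

theorem strictMonoOn_genF (hp : 1 < p) (hq : 1 ≤ q) : StrictMonoOn (genF p q) (Icc 0 1) := by
  refine strictMonoOn_of_deriv_pos (convex_Icc 0 1) (continuousOn_genF hp hq) fun s hs => ?_
  rw [interior_Icc] at hs
  have hs' : s ∈ Ioo (-1) 1 := ⟨by linarith [hs.1], hs.2⟩
  rw [(hasDerivAt_genF (p := p) (by linarith) hs').deriv]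
  exact Real.rpow_pos_of_pos (one_sub_rpow_pos (by linarith) (abs_lt.2 hs')) _

theorem genF_one_pos (hp : 1 < p) (hq : 1 ≤ q) : 0 < genF p q 1 := by
  simpa using strictMonoOn_genF hp hq (left_mem_Icc.2 zero_le_one) (right_mem_Icc.2 zero_le_one)
    one_pos

end GenF

section SinBase

variable {p q : ℝ}

theorem sinBase_nonneg (p q x : ℝ) : 0 ≤ sinBase p q x := Real.sSup_nonneg fun _ hs => hs.1.1

theorem sinBase_le_one (p q x : ℝ) : sinBase p q x ≤ 1 :=
  Real.sSup_le (fun _ hs => hs.1.2) zero_le_one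

-- On `(-∞, 0)` the defining set is empty and `sSup ∅ = 0`, so `sinBase` is monotone on all of `ℝ`.
theorem monotone_sinBase (p q : ℝ) : Monotone (sinBase p q) := by
  intro x y hxy
  rcases eq_empty_or_nonempty {s : ℝ | s ∈ Icc (0:ℝ) 1 ∧ genF p q s ≤ x} with h | h
  · rw [sinBase, h, Real.sSup_empty]
    exact sinBase_nonneg p q y
  · exact csSup_le_csSup (bddAbove_Icc.mono fun s hs => hs.1) h
      fun s hs => ⟨hs.1, hs.2.trans hxy⟩

theorem sinBase_genF (hp : 1 < p) (hq : 1 ≤ q) {s : ℝ} (hs : s ∈ Icc 0 1) :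
    sinBase p q (genF p q s) = s := by
  have hmono := strictMonoOn_genF hp hq
  have hset : {t : ℝ | t ∈ Icc (0:ℝ) 1 ∧ genF p q t ≤ genF p q s} = Icc 0 s := by
    ext t
    constructor
    · rintro ⟨ht, hle⟩
      exact ⟨ht.1, (hmono.le_iff_le ht hs).1 hle⟩
    · rintro ⟨ht0, hts⟩
      have ht : t ∈ Icc (0:ℝ) 1 := ⟨ht0, hts.trans hs.2⟩
      exact ⟨ht, (hmono.le_iff_le ht hs).2 hts⟩
  rw [sinBase, hset, csSup_Icc hs.1]

theorem sinBase_of_nonpos (hp : 1 < p) (hq : 1 ≤ q) {x : ℝ} (hx : x ≤ 0) :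
    sinBase p q x = 0 := by
  have h0 := sinBase_genF hp hq (left_mem_Icc.2 zero_le_one)
  rw [genF_zero] at h0
  exact (h0 ▸ monotone_sinBase p q hx).antisymm (sinBase_nonneg p q x)

theorem genF_sinBase (hp : 1 < p) (hq : 1 ≤ q) {x : ℝ} (hx : x ∈ Icc 0 (genF p q 1)) :
    genF p q (sinBase p q x) = x := by
  obtain ⟨s, hs, rfl⟩ :=
    intermediate_value_Icc zero_le_one (continuousOn_genF hp hq) (by rwa [genF_zero])
  rw [sinBase_genF hp hq hs]

theorem continuous_sinBase (hp : 1 < p) (hq : 1 ≤ q) : Continuous (sinBase p q) := by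
  let f : ℝ → Icc (0:ℝ) 1 := fun x =>
    ⟨sinBase p q x, sinBase_nonneg p q x, sinBase_le_one p q x⟩
  have hf : Continuous f := Monotone.continuous_of_surjective (fun _ _ h => monotone_sinBase p q h)
    fun s => ⟨genF p q s, Subtype.ext (sinBase_genF hp hq s.2)⟩
  exact continuous_subtype_val.comp hf

theorem sinBase_lt_one (hp : 1 < p) (hq : 1 ≤ q) {x : ℝ} (hx : x ∈ Ico 0 (genF p q 1)) :
    sinBase p q x < 1 := by
  refine (sinBase_le_one p q x).lt_of_ne fun h => hx.2.ne ?_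
  rw [← genF_sinBase hp hq ⟨hx.1, hx.2.le⟩, h]

theorem sinBase_pos (hp : 1 < p) (hq : 1 ≤ q) {x : ℝ} (hx : x ∈ Ioo 0 (genF p q 1)) :
    0 < sinBase p q x := by
  refine (sinBase_nonneg p q x).lt_of_ne fun h => hx.1.ne ?_
  rw [← genF_sinBase hp hq ⟨hx.1.le, hx.2.le⟩, ← h, genF_zero]

noncomputable def cosOfSin (p q s : ℝ) : ℝ := (1 - s ^ q) ^ (1 / p)

theorem hasDerivWithinAt_sinBase (hp : 1 < p) (hq : 1 ≤ q) {x : ℝ}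
    (hx : x ∈ Ico 0 (genF p q 1)) :
    HasDerivWithinAt (sinBase p q) (cosOfSin p q (sinBase p q x)) (Ici 0) x := by
  have hs : sinBase p q x ∈ Ioo (-1) 1 :=
    ⟨by linarith [sinBase_nonneg p q x], sinBase_lt_one hp hq hx⟩
  have hpos : 0 < 1 - sinBase p q x ^ q := one_sub_rpow_pos (by linarith) (abs_lt.2 hs)
  have hcont : Tendsto (sinBase p q) (𝓝[Ici 0] x) (𝓝[univ] (sinBase p q x)) := by
    rw [nhdsWithin_univ]
    exact (continuous_sinBase hp hq).continuousWithinAt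
  have hinv : ∀ᶠ y in 𝓝[Ici 0] x, genF p q (sinBase p q y) = y := by
    filter_upwards [self_mem_nhdsWithin, nhdsWithin_le_nhds (Iio_mem_nhds hx.2)] with y hy0 hyA
    exact genF_sinBase hp hq ⟨hy0, le_of_lt hyA⟩
  have h := HasDerivWithinAt.of_local_left_inverse hcont
    (hasDerivAt_genF (p := p) (by linarith) hs).hasDerivWithinAt
    (Real.rpow_pos_of_pos hpos _).ne' hx.1 hinv
  rwa [Real.rpow_neg hpos.le, inv_inv] at h

theorem hasDerivAt_sinBase (hp : 1 < p) (hq : 1 ≤ q) {x : ℝ} (hx : x ∈ Ioo 0 (genF p q 1)) :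
    HasDerivAt (sinBase p q) (cosOfSin p q (sinBase p q x)) x :=
  (hasDerivWithinAt_sinBase hp hq ⟨hx.1.le, hx.2⟩).hasDerivAt (Ici_mem_nhds hx.1)

theorem hasDerivWithinAt_sinBase_Ici_zero (hp : 1 < p) (hq : 1 ≤ q) :
    HasDerivWithinAt (sinBase p q) 1 (Ici 0) 0 := by
  have h := hasDerivWithinAt_sinBase hp hq ⟨le_rfl, genF_one_pos hp hq⟩
  rwa [sinBase_of_nonpos hp hq le_rfl, cosOfSin, Real.zero_rpow (by linarith), sub_zero,
    Real.one_rpow] at h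

theorem hasDerivWithinAt_sinBase_Iic_zero (hp : 1 < p) (hq : 1 ≤ q) :
    HasDerivWithinAt (sinBase p q) 0 (Iic 0) 0 :=
  (hasDerivWithinAt_const 0 _ 0).congr (fun _ hy => sinBase_of_nonpos hp hq hy)
    (sinBase_of_nonpos hp hq le_rfl)

end SinBase

section Inequality

variable {p q : ℝ}

theorem hasDerivAt_cosOfSin (hq : 0 < q) {s : ℝ} (hs : s ∈ Ioo 0 1) :
    HasDerivAt (cosOfSin p q) (-(q / p) * s ^ (q - 1) * (1 - s ^ q) ^ (1 / p - 1)) s := by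
  have hpos : 0 < 1 - s ^ q := one_sub_rpow_pos hq (by rw [abs_of_pos hs.1]; exact hs.2)
  have h := ((hasDerivAt_const s (1:ℝ)).fun_sub (Real.hasDerivAt_rpow_const (p := q)
    (Or.inl hs.1.ne'))).rpow_const (p := 1 / p) (Or.inl hpos.ne')
  show HasDerivAt (fun y => (1 - y ^ q) ^ (1 / p)) _ s
  convert h using 1
  ring

theorem one_le_rpow_mul_add_mul_one_sub {α β v : ℝ} (hα0 : 0 ≤ α) (hα1 : α ≤ 1) (hαβ : α ≤ β)
    (hv0 : 0 < v) (hv1 : v ≤ 1) : 1 ≤ v ^ (α - 1) * (v + β * (1 - v)) := by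
  have hbernoulli : v ^ (1 - α) ≤ 1 + (1 - α) * (v - 1) := by
    simpa using rpow_one_add_le_one_add_mul_self (s := v - 1) (by linarith) (by linarith)
      (by linarith : 1 - α ≤ 1)
  calc 1 = v ^ (α - 1) * v ^ (1 - α) := by rw [← Real.rpow_add hv0]; simp
    _ ≤ v ^ (α - 1) * (1 + (1 - α) * (v - 1)) := by gcongr
    _ ≤ v ^ (α - 1) * (v + β * (1 - v)) :=
        mul_le_mul_of_nonneg_left (by nlinarith) (by positivity)

theorem one_le_cosOfSin_sq_sub (hp : 2 ≤ p) (hq : 2 ≤ q) {s : ℝ} (hs : s ∈ Ioo 0 1) :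
    1 ≤ cosOfSin p q s ^ 2
      - -(q / p) * s ^ (q - 1) * (1 - s ^ q) ^ (1 / p - 1) * cosOfSin p q s * s := by
  have hsq : s ^ (q - 1) * s = s ^ q := by
    rw [Real.rpow_sub_one hs.1.ne', div_mul_cancel₀ _ hs.1.ne']
  set v := 1 - s ^ q with hv
  have hv0 : 0 < v := one_sub_rpow_pos (by linarith) (by rw [abs_of_pos hs.1]; exact hs.2)
  have hv1 : v ≤ 1 := sub_le_self _ (Real.rpow_nonneg hs.1.le q)
  have hsq' : cosOfSin p q s ^ 2 = v ^ (2 / p - 1) * v := by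
    rw [cosOfSin, ← Real.rpow_natCast, ← Real.rpow_mul hv0.le, ← Real.rpow_add_one hv0.ne']
    ring_nf
  have hmul : v ^ (1 / p - 1) * cosOfSin p q s = v ^ (2 / p - 1) := by
    rw [cosOfSin, ← Real.rpow_add hv0]
    ring_nf
  calc 1 ≤ v ^ (2 / p - 1) * (v + q / p * (1 - v)) :=
        one_le_rpow_mul_add_mul_one_sub (by positivity) ((div_le_one (by linarith)).2 hp)
          (by gcongr) hv0 hv1
    _ = _ := by
        linear_combination -hsq' - (q / p) * v ^ (2 / p - 1) * hv
          - (q / p) * (v ^ (1 / p - 1) * cosOfSin p q s) * hsq - (q / p) * s ^ q * hmul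

end Inequality

theorem one_le_deriv_sinBase_sq_sub {p q : ℝ} (hp : 2 ≤ p) (hq : 2 ≤ q) {x : ℝ}
    (hx : x ∈ Ioo 0 (genF p q 1)) :
    1 ≤ deriv (sinBase p q) x ^ 2 - deriv (deriv (sinBase p q)) x * sinBase p q x := by
  have hp' : 1 < p := by linarith
  have hq' : 1 ≤ q := by linarith
  have hs : sinBase p q x ∈ Ioo 0 1 :=
    ⟨sinBase_pos hp' hq' hx, sinBase_lt_one hp' hq' ⟨hx.1.le, hx.2⟩⟩
  have hderiv : deriv (sinBase p q) =ᶠ[𝓝 x] cosOfSin p q ∘ sinBase p q :=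
    eventually_of_mem (isOpen_Ioo.mem_nhds hx) fun y hy => (hasDerivAt_sinBase hp' hq' hy).deriv
  rw [(hasDerivAt_sinBase hp' hq' hx).deriv, hderiv.deriv_eq,
    ((hasDerivAt_cosOfSin (by linarith) hs).comp x (hasDerivAt_sinBase hp' hq' hx)).deriv]
  exact one_le_cosOfSin_sq_sub hp hq hs

section GenSin

variable {p q : ℝ}

theorem half_genPi (p q : ℝ) : genPi p q / 2 = genF p q 1 := by
  rw [genPi]
  ring

theorem sinHalf_of_le {y : ℝ} (hy : y ≤ genF p q 1) : sinHalf p q y = sinBase p q y :=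
  if_pos (by rwa [half_genPi])

theorem sinHalf_of_lt {y : ℝ} (hy : genF p q 1 < y) :
    sinHalf p q y = sinBase p q (genPi p q - y) :=
  if_neg (by rw [half_genPi]; exact hy.not_ge)

theorem genSin_eq_sinHalf {y : ℝ} (hy0 : 0 ≤ y) (hyπ : y < genPi p q) :
    genSin p q y = sinHalf p q y := by
  have hπ : 0 < genPi p q := hy0.trans_lt hyπ
  have hfloor : ⌊y / (2 * genPi p q)⌋ = 0 :=
    Int.floor_eq_zero_iff.2 ⟨by positivity, by rw [div_lt_one (by positivity)]; linarith⟩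
  simp only [genSin, hfloor, Int.cast_zero, mul_zero, sub_zero, if_pos hyπ.le]

theorem genSin_eq_neg_sinHalf_neg {y : ℝ} (hπy : -genPi p q < y) (hy0 : y < 0) :
    genSin p q y = -sinHalf p q (-y) := by
  have hπ : 0 < genPi p q := by linarith
  have hfloor : ⌊y / (2 * genPi p q)⌋ = -1 := by
    rw [Int.floor_eq_iff]
    push_cast
    constructor
    · rw [le_div_iff₀ (by positivity)]
      linarith
    · rw [div_lt_iff₀ (by positivity)]
      linarith
  simp only [genSin, hfloor, Int.cast_neg, Int.cast_one, mul_neg, mul_one, sub_neg_eq_add]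
  rw [if_neg (by linarith), show 2 * genPi p q - (y + 2 * genPi p q) = -y by ring]

theorem genSin_eventuallyEq_sinBase {x : ℝ} (hx : x ∈ Ioo 0 (genF p q 1)) :
    genSin p q =ᶠ[𝓝 x] sinBase p q := by
  filter_upwards [isOpen_Ioo.mem_nhds hx] with y hy
  rw [genSin_eq_sinHalf hy.1.le (by rw [genPi]; linarith [hy.1, hy.2]), sinHalf_of_le hy.2.le]

theorem genSin_eventuallyEq_sinBase_genPi_sub {x : ℝ} (hx : x ∈ Ioo (genF p q 1) (genPi p q)) :
    genSin p q =ᶠ[𝓝 x] fun y => sinBase p q (genPi p q - y) := by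
  have hA : 0 < genF p q 1 := by have := hx.1.trans hx.2; rw [genPi] at this; linarith
  filter_upwards [isOpen_Ioo.mem_nhds hx] with y hy
  rw [genSin_eq_sinHalf (by linarith [hy.1]) hy.2, sinHalf_of_lt hy.1]

theorem genSin_eventuallyEq_sinBase_sub_sinBase_neg (hp : 1 < p) (hq : 1 ≤ q) :
    genSin p q =ᶠ[𝓝 0] fun y => sinBase p q y - sinBase p q (-y) := by
  have hA := genF_one_pos hp hq
  have hπ : genPi p q = 2 * genF p q 1 := rfl
  filter_upwards [Ioo_mem_nhds (neg_neg_of_pos hA) hA] with y hy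
  rcases le_or_gt 0 y with hy0 | hy0
  · rw [genSin_eq_sinHalf hy0 (by linarith [hy.2]), sinHalf_of_le hy.2.le,
      sinBase_of_nonpos hp hq (neg_nonpos.2 hy0), sub_zero]
  · rw [genSin_eq_neg_sinHalf_neg (by linarith [hy.1]) hy0, sinHalf_of_le (by linarith [hy.1]),
      sinBase_of_nonpos hp hq hy0.le, zero_sub]

theorem hasDerivAt_genSin_zero (hp : 1 < p) (hq : 1 ≤ q) : HasDerivAt (genSin p q) 1 0 := by
  have h := (hasDerivWithinAt_sinBase_Ici_zero hp hq).hasDerivAt_sub_comp_neg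
    (hasDerivWithinAt_sinBase_Iic_zero hp hq)
  rw [add_zero] at h
  exact h.congr_of_eventuallyEq (genSin_eventuallyEq_sinBase_sub_sinBase_neg hp hq)

end GenSin

/-- For `2 ≤ p, q < ∞`, `S = sin_{p,q}` satisfies condition (S4):
`S'(x)² − S''(x) S(x) ≥ 1` on `[0, π_{p,q}) \ {π_{p,q}/2}`. -/
theorem genSin_satisfies_S4 (p q : ℝ) (hp : 2 ≤ p) (hq : 2 ≤ q) :
    ∀ x ∈ Ico 0 (genPi p q), x ≠ genPi p q / 2 →
      (deriv (genSin p q) x) ^ 2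
        - deriv (deriv (genSin p q)) x * genSin p q x ≥ 1 := by
  intro x ⟨hx0, hxπ⟩ hxA
  rw [half_genPi] at hxA
  have hp' : 1 < p := by linarith
  have hq' : 1 ≤ q := by linarith
  obtain rfl | hx0 := hx0.eq_or_lt
  · rw [(hasDerivAt_genSin_zero hp' hq').deriv,
      (genSin_eventuallyEq_sinBase_sub_sinBase_neg hp' hq').eq_of_nhds, neg_zero, sub_self]
    norm_num
  rcases hxA.lt_or_gt with hxA | hxA
  · have h := genSin_eventuallyEq_sinBase ⟨hx0, hxA⟩
    rw [h.deriv_eq, h.deriv.deriv_eq, h.eq_of_nhds]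
    exact one_le_deriv_sinBase_sq_sub hp hq ⟨hx0, hxA⟩
  · have h := genSin_eventuallyEq_sinBase_genPi_sub ⟨hxA, hxπ⟩
    rw [h.deriv_eq, h.deriv.deriv_eq, h.eq_of_nhds, deriv_comp_const_sub,
      deriv_deriv_comp_const_sub, neg_sq]
    have hπ : genPi p q = 2 * genF p q 1 := rfl
    exact one_le_deriv_sinBase_sq_sub hp hq ⟨by linarith, by linarith⟩
end

section
/- Let a ∈ (0,∞), let P be a finite subset of (0,a), and let S : ℝ → ℝ satisfy: (S2) 0 < S(x) < x for x ∈ (0,a); (S3) S ∈ C([0,a]) ∩ C¹([0,a)) ∩ C²([0,a) \ P) with S(0) = 0, S'(0) = 1 and S(a) = 0; (S4) S'(x)² − S''(x)·S(x) ≥ 1 for x ∈ [0,a) \ P. Suppose moreover that the limit d := lim_{x→0⁺} S''(x)/x exists and satisfies −∞ < d < 0. Then a² < −12/d, and for all x ∈ (0,a), (a² − x²)/(a² + x²) < S(x)/x < (12 + d x²)/(12 − d x²). -/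
open Real Set Filter Topology

/-!
Put `f x = x² (x + S x) / (x - S x)` and `M = S² + x S - x² - x² S'`, so that
`f' = -2 x M / (x - S)²`. `M` is positive on `(0, a)`: where `S' ≤ -1` this is immediate, and
on a stretch where `S' > -1` the quotient `M / S` is strictly increasing, since
`(M / S)' S² = x² (S'² - S'' S - 1) + (1 + S') (x - S)²` and (S4) makes the first term
nonnegative. Going back from `x₀` to the last point `α` with `S' α ≤ -1` (or to `0`, where
`M / S → 0`) gives `M x₀ / S x₀ > 0`. Hence `f` is strictly decreasing on `(0, a]`, from its
limit `-12 / d` at `0⁺` (two applications of l'Hôpital's rule give `(x - S x) / x³ → -d / 6`)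
down to `f a = a²`, and `a² < f x < -12 / d` unfolds to the two bounds.
-/

theorem strictMonoOn_Icc_of_deriv_pos_off_finite {T : Set ℝ} (hT : T.Finite) {f : ℝ → ℝ}
    {p q : ℝ} (hf : ContinuousOn f (Icc p q)) (hf' : ∀ x ∈ Ioo p q \ T, 0 < deriv f x) :
    StrictMonoOn f (Icc p q) := by
  induction T, hT using Set.Finite.induction_on generalizing p q with
  | empty =>
    refine strictMonoOn_of_deriv_pos (convex_Icc p q) hf fun x hx ↦ hf' x ⟨?_, notMem_empty x⟩
    rwa [interior_Icc] at hx
  | @insert t T _ _ ih =>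
    by_cases ht : t ∈ Ioo p q
    · have hleft : StrictMonoOn f (Icc p t) :=
        ih (hf.mono (Icc_subset_Icc_right ht.2.le)) fun x hx ↦
          hf' x ⟨⟨hx.1.1, hx.1.2.trans ht.2⟩, by simp [hx.1.2.ne, hx.2]⟩
      have hright : StrictMonoOn f (Icc t q) :=
        ih (hf.mono (Icc_subset_Icc_left ht.1.le)) fun x hx ↦
          hf' x ⟨⟨ht.1.trans hx.1.1, hx.1.2⟩, by simp [hx.1.1.ne', hx.2]⟩
      rw [← Icc_union_Icc_eq_Icc ht.1.le ht.2.le]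
      exact hleft.union hright (isGreatest_Icc ht.1.le) (isLeast_Icc ht.2.le)
    · exact ih hf fun x hx ↦ hf' x ⟨hx.1, by rintro (rfl | h) <;> [exact ht hx.1; exact hx.2 h]⟩

theorem StrictMonoOn.lt_of_tendsto_nhdsGT {f : ℝ → ℝ} {a b L : ℝ} (hab : a < b)
    (hf : StrictMonoOn f (Ioc a b)) (hL : Tendsto f (𝓝[>] a) (𝓝 L)) : L < f b := by
  obtain ⟨c, hac, hcb⟩ := exists_between hab
  have hLc : L ≤ f c := le_of_tendsto hL <| by
    filter_upwards [Ioo_mem_nhdsGT hac] with x hx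
    exact (hf ⟨hx.1, hx.2.le.trans hcb.le⟩ ⟨hac, hcb.le⟩ hx.2).le
  exact hLc.trans_lt (hf ⟨hac, hcb.le⟩ ⟨hab, le_rfl⟩ hcb)

theorem StrictAntiOn.lt_of_tendsto_nhdsGT {f : ℝ → ℝ} {a b L : ℝ} (hab : a < b)
    (hf : StrictAntiOn f (Ioc a b)) (hL : Tendsto f (𝓝[>] a) (𝓝 L)) : f b < L :=
  neg_lt_neg_iff.mp (StrictMonoOn.lt_of_tendsto_nhdsGT (f := fun x ↦ -f x) hab hf.neg hL.neg)

theorem exists_lt_on_Ioc_of_continuousOn {g : ℝ → ℝ} {p q c : ℝ} (hpq : p < q)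
    (hg : ContinuousOn g (Icc p q)) (hq : c < g q) :
    ∃ α ∈ Ico p q, (α = p ∨ g α ≤ c) ∧ ∀ x ∈ Ioc α q, c < g x := by
  set A : Set ℝ := insert p {x ∈ Icc p q | g x ≤ c}
  have hAsub : A ⊆ Icc p q := insert_subset ⟨le_rfl, hpq.le⟩ fun x hx ↦ hx.1
  have hAcomp : IsCompact A :=
    isCompact_Icc.of_isClosed_subset
      (isClosed_singleton.union (hg.preimage_isClosed_of_isClosed isClosed_Icc isClosed_Iic))
      hAsub
  have hαA : sSup A ∈ A := hAcomp.sSup_mem ⟨p, mem_insert p _⟩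
  have hαq : sSup A ≠ q := by
    rintro hα
    rcases hα ▸ hαA with h | h
    · exact hpq.ne' h
    · exact h.2.not_gt hq
  refine ⟨sSup A, ⟨(hAsub hαA).1, lt_of_le_of_ne (hAsub hαA).2 hαq⟩, ?_, fun x hx ↦ ?_⟩
  · exact hαA.imp id And.right
  · by_contra! hxc
    exact (le_csSup hAcomp.bddAbove (Or.inr ⟨⟨(hAsub hαA).1.trans hx.1.le, hx.2⟩, hxc⟩)).not_gt
      hx.1

theorem Set.Finite.compl_mem_nhdsNE {X : Type*} [TopologicalSpace X] [T1Space X] {P : Set X}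
    (hP : P.Finite) (c : X) : Pᶜ ∈ 𝓝[≠] c := by
  have : (P \ {c})ᶜ ∈ 𝓝 c := hP.sdiff.isClosed.isOpen_compl.mem_nhds (by simp)
  filter_upwards [nhdsWithin_le_nhds this, self_mem_nhdsWithin] with x hx hxc hxP
  exact hx ⟨hxP, hxc⟩

theorem ContDiffOn.continuousOn_deriv_Ico {S : ℝ → ℝ} {a b : ℝ} (hS : ContDiffOn ℝ 1 S (Ico a b))
    (ha : DifferentiableAt ℝ S a) : ContinuousOn (deriv S) (Ico a b) := by
  refine (hS.continuousOn_derivWithin (uniqueDiffOn_Ico a b) le_rfl).congr fun x hx ↦ ?_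
  rcases hx.1.eq_or_lt with rfl | hax
  · exact (ha.derivWithin ((uniqueDiffOn_Ico _ b) _ hx)).symm
  · exact (derivWithin_of_mem_nhds (Ico_mem_nhds hax hx.2)).symm

theorem ContDiffOn.hasDerivAt_deriv {S : ℝ → ℝ} {s : Set ℝ} {x : ℝ} (hS : ContDiffOn ℝ 2 S s)
    (hx : s ∈ 𝓝 x) : HasDerivAt (deriv S) (deriv (deriv S) x) x := by
  obtain ⟨t, hts, ht, hxt⟩ := mem_nhds_iff.mp hx
  exact (((hS.mono hts).deriv_of_isOpen ht (by norm_num : (1 : WithTop ℕ∞) + 1 ≤ 2)).contDiffAt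
    (ht.mem_nhds hxt)).differentiableAt one_ne_zero |>.hasDerivAt

theorem HasDerivAt.tendsto_div_self {S : ℝ → ℝ} {s : ℝ} (hS : HasDerivAt S s 0) (h0 : S 0 = 0) :
    Tendsto (fun x ↦ S x / x) (𝓝[≠] 0) (𝓝 s) := by
  simpa [h0, div_eq_inv_mul] using hS.tendsto_slope_zero

namespace Redheffer

variable {S : ℝ → ℝ} {x : ℝ}

noncomputable def f (S : ℝ → ℝ) (x : ℝ) : ℝ := x ^ 2 * (x + S x) / (x - S x)

noncomputable def M (S : ℝ → ℝ) (x : ℝ) : ℝ := S x ^ 2 + x * S x - x ^ 2 - x ^ 2 * deriv S x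

theorem hasDerivAt_f (hS : HasDerivAt S (deriv S x) x) (hx : x - S x ≠ 0) :
    HasDerivAt (f S) (-2 * x * M S x / (x - S x) ^ 2) x := by
  have hnum : HasDerivAt (fun y ↦ y ^ 2 * (y + S y))
      (2 * x * (x + S x) + x ^ 2 * (1 + deriv S x)) x := by
    simpa using (hasDerivAt_pow 2 x).fun_mul ((hasDerivAt_id' x).add hS)
  refine (hnum.fun_div ((hasDerivAt_id' x).fun_sub hS) hx).congr_deriv ?_
  rw [div_eq_div_iff (pow_ne_zero 2 hx) (pow_ne_zero 2 hx), M]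
  ring

theorem hasDerivAt_M {s₂ : ℝ} (hS : HasDerivAt S (deriv S x) x)
    (hS' : HasDerivAt (deriv S) s₂ x) :
    HasDerivAt (M S) (2 * S x * deriv S x + S x - x * deriv S x - 2 * x - x ^ 2 * s₂) x := by
  have := (((hS.fun_pow 2).add ((hasDerivAt_id' x).fun_mul hS)).sub (hasDerivAt_pow 2 x)).sub
    ((hasDerivAt_pow 2 x).fun_mul hS')
  refine this.congr_deriv ?_
  simp only [Nat.cast_ofNat]
  ring

theorem hasDerivAt_M_div {s₂ : ℝ} (hS : HasDerivAt S (deriv S x) x)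
    (hS' : HasDerivAt (deriv S) s₂ x) (hSx : S x ≠ 0) :
    HasDerivAt (fun y ↦ M S y / S y)
      ((x ^ 2 * (deriv S x ^ 2 - s₂ * S x - 1) + (1 + deriv S x) * (x - S x) ^ 2) / S x ^ 2) x := by
  refine ((hasDerivAt_M hS hS').fun_div hS hSx).congr_deriv ?_
  unfold M
  ring

theorem M_pos_of_deriv_le (hx : 0 < x) (hSx : 0 < S x) (h : deriv S x ≤ -1) : 0 < M S x := by
  unfold M
  nlinarith [mul_le_mul_of_nonneg_left h (sq_nonneg x)]

theorem tendsto_M_div (hS : Tendsto (fun x ↦ S x / x) (𝓝[>] 0) (𝓝 1))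
    (hS' : Tendsto (deriv S) (𝓝[>] 0) (𝓝 1)) :
    Tendsto (fun x ↦ M S x / S x) (𝓝[>] 0) (𝓝 0) := by
  have hid : Tendsto (fun x : ℝ ↦ x) (𝓝[>] 0) (𝓝 0) := tendsto_id.mono_left nhdsWithin_le_nhds
  have hdiv : Tendsto (fun x ↦ x / (S x / x)) (𝓝[>] 0) (𝓝 (0 / 1)) := hid.div hS one_ne_zero
  have := (((hS.pow 2).add hS).sub_const 1 |>.sub hS').mul hdiv
  rw [zero_div, mul_zero] at this
  refine this.congr' ?_
  filter_upwards [self_mem_nhdsWithin] with y (hy : 0 < y)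
  rcases eq_or_ne (S y) 0 with h | h
  · simp [M, h]
  · unfold M
    field_simp

variable {a : ℝ} {P : Set ℝ}

theorem strictMonoOn_M_div (hP : P.Finite) (hS2 : ∀ x ∈ Ioo 0 a, 0 < S x ∧ S x < x)
    (hS' : ∀ x ∈ Ioo 0 a, HasDerivAt S (deriv S x) x)
    (hS'cont : ContinuousOn (deriv S) (Ioo 0 a))
    (hS'' : ∀ x ∈ Ioo 0 a \ P, HasDerivAt (deriv S) (deriv (deriv S) x) x)
    (hS4 : ∀ x ∈ Ioo 0 a \ P, 1 ≤ deriv S x ^ 2 - deriv (deriv S) x * S x)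
    {p q : ℝ} (hp : 0 < p) (hq : q < a) (h : ∀ x ∈ Ioo p q, -1 < deriv S x) :
    StrictMonoOn (fun x ↦ M S x / S x) (Icc p q) := by
  have hsub : Icc p q ⊆ Ioo 0 a := Icc_subset_Ioo hp hq
  have hScont : ContinuousOn S (Icc p q) := fun x hx ↦
    (hS' x (hsub hx)).continuousAt.continuousWithinAt
  have hS'c : ContinuousOn (deriv S) (Icc p q) := hS'cont.mono hsub
  refine strictMonoOn_Icc_of_deriv_pos_off_finite hP ?_ fun x hx ↦ ?_
  · refine ContinuousOn.div ?_ hScont fun x hx ↦ (hS2 x (hsub hx)).1.ne'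
    unfold M
    fun_prop
  have hxI : x ∈ Ioo 0 a := hsub (Ioo_subset_Icc_self hx.1)
  obtain ⟨hSx, hSxx⟩ := hS2 x hxI
  rw [(hasDerivAt_M_div (hS' x hxI) (hS'' x ⟨hxI, hx.2⟩) hSx.ne').deriv]
  have hsq : 0 ≤ x ^ 2 * (deriv S x ^ 2 - deriv (deriv S) x * S x - 1) :=
    mul_nonneg (sq_nonneg x) (by linarith [hS4 x ⟨hxI, hx.2⟩])
  have hcross : 0 < (1 + deriv S x) * (x - S x) ^ 2 :=
    mul_pos (by linarith [h x hx.1]) (pow_pos (by linarith) 2)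
  positivity

theorem M_pos (hP : P.Finite) (hS2 : ∀ x ∈ Ioo 0 a, 0 < S x ∧ S x < x)
    (hS' : ∀ x ∈ Ioo 0 a, HasDerivAt S (deriv S x) x)
    (hS'cont : ContinuousOn (deriv S) (Ico 0 a))
    (hS'' : ∀ x ∈ Ioo 0 a \ P, HasDerivAt (deriv S) (deriv (deriv S) x) x)
    (hS4 : ∀ x ∈ Ioo 0 a \ P, 1 ≤ deriv S x ^ 2 - deriv (deriv S) x * S x)
    (hSlim : Tendsto (fun x ↦ S x / x) (𝓝[>] 0) (𝓝 1))
    (hS'lim : Tendsto (deriv S) (𝓝[>] 0) (𝓝 1)) {x₀ : ℝ} (hx₀ : x₀ ∈ Ioo 0 a) :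
    0 < M S x₀ := by
  rcases le_or_gt (deriv S x₀) (-1) with h | h
  · exact M_pos_of_deriv_le hx₀.1 (hS2 x₀ hx₀).1 h
  obtain ⟨α, hα, hαbad, hgood⟩ := exists_lt_on_Ioc_of_continuousOn hx₀.1
    (hS'cont.mono (Icc_subset_Ico_right hx₀.2)) h
  have hmono : StrictMonoOn (fun x ↦ M S x / S x) (Ioc α x₀) := fun x hx y hy hxy ↦
    strictMonoOn_M_div hP hS2 hS' (hS'cont.mono Ioo_subset_Ico_self) hS'' hS4
      (hα.1.trans_lt hx.1) hx₀.2 (fun z hz ↦ hgood z ⟨hx.1.trans hz.1, hz.2.le⟩)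
      ⟨le_rfl, hx.2⟩ ⟨hxy.le, hy.2⟩ hxy
  obtain ⟨L, hL, hlim⟩ : ∃ L, 0 ≤ L ∧ Tendsto (fun x ↦ M S x / S x) (𝓝[>] α) (𝓝 L) := by
    rcases hα.1.eq_or_lt with rfl | hα0
    · exact ⟨0, le_rfl, tendsto_M_div hSlim hS'lim⟩
    have hαI : α ∈ Ioo 0 a := ⟨hα0, hα.2.trans hx₀.2⟩
    have hSα := (hS2 α hαI).1
    refine ⟨M S α / S α, ?_, ?_⟩
    · refine (div_pos (M_pos_of_deriv_le hα0 hSα ?_) hSα).le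
      exact hαbad.resolve_left hα0.ne'
    · have h1 := (hS' α hαI).continuousAt
      have h2 := hS'cont.continuousAt (Ico_mem_nhds hα0 hαI.2)
      have : ContinuousAt (fun x ↦ M S x / S x) α := by
        unfold M
        fun_prop (disch := exact hSα.ne')
      exact this.tendsto.mono_left nhdsWithin_le_nhds
  have hpos : 0 < M S x₀ / S x₀ :=
    hL.trans_lt (hmono.lt_of_tendsto_nhdsGT (f := fun x ↦ M S x / S x) hα.2 hlim)
  exact (div_pos_iff_of_pos_right (hS2 x₀ hx₀).1).mp hpos

theorem strictAntiOn_f (hS2 : ∀ x ∈ Ioo 0 a, 0 < S x ∧ S x < x)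
    (hS' : ∀ x ∈ Ioo 0 a, HasDerivAt S (deriv S x) x) (hScont : ContinuousOn S (Icc 0 a))
    (hSa : S a = 0) (hM : ∀ x ∈ Ioo 0 a, 0 < M S x) : StrictAntiOn (f S) (Ioc 0 a) := by
  have hden : ∀ x ∈ Ioc 0 a, x - S x ≠ 0 := by
    rintro x ⟨hx0, hxa⟩
    rcases hxa.eq_or_lt with rfl | hxa
    · simpa [hSa] using hx0.ne'
    · linarith [(hS2 x ⟨hx0, hxa⟩).2]
  refine strictAntiOn_of_deriv_neg (convex_Ioc 0 a) ?_ fun x hx ↦ ?_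
  · have := hScont.mono Ioc_subset_Icc_self
    unfold f
    exact ContinuousOn.div (by fun_prop) (by fun_prop) hden
  rw [interior_Ioc] at hx
  rw [(hasDerivAt_f (hS' x hx) (hden x (Ioo_subset_Ioc_self hx))).deriv]
  have hxS : 0 < x - S x := by linarith [(hS2 x hx).2]
  exact div_neg_of_neg_of_pos (by nlinarith [hM x hx, hx.1]) (pow_pos hxS 2)

theorem tendsto_sub_div_cube {d : ℝ}
    (hS' : ∀ᶠ x in 𝓝[>] 0, HasDerivAt S (deriv S x) x)
    (hS'' : ∀ᶠ x in 𝓝[>] 0, HasDerivAt (deriv S) (deriv (deriv S) x) x)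
    (hSlim : Tendsto S (𝓝[>] 0) (𝓝 0)) (hS'lim : Tendsto (deriv S) (𝓝[>] 0) (𝓝 1))
    (hlim : Tendsto (fun x ↦ deriv (deriv S) x / x) (𝓝[>] 0) (𝓝 d)) :
    Tendsto (fun x ↦ (x - S x) / x ^ 3) (𝓝[>] 0) (𝓝 (-d / 6)) := by
  have hid : Tendsto (fun x : ℝ ↦ x) (𝓝[>] 0) (𝓝 0) := tendsto_id.mono_left nhdsWithin_le_nhds
  have hpos : ∀ᶠ x in 𝓝[>] (0 : ℝ), 0 < x := self_mem_nhdsWithin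
  have hstep : Tendsto (fun x ↦ (1 - deriv S x) / (3 * x ^ 2)) (𝓝[>] 0) (𝓝 (-d / 6)) := by
    refine HasDerivAt.lhopital_zero_nhdsGT (f' := fun x ↦ -deriv (deriv S) x)
      (g' := fun x ↦ 6 * x) ?_ ?_ ?_ ?_ ?_ ?_
    · filter_upwards [hS''] with x hx using by simpa using hx.const_sub 1
    · filter_upwards with x using
        ((hasDerivAt_pow 2 x).const_mul 3).congr_deriv (by push_cast; ring)
    · filter_upwards [hpos] with x hx using by positivity
    · simpa using hS'lim.const_sub 1
    · simpa using (hid.pow 2).const_mul 3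
    · refine (hlim.neg.div_const 6).congr' ?_
      filter_upwards [hpos] with x hx
      field_simp
  refine HasDerivAt.lhopital_zero_nhdsGT (f' := fun x ↦ 1 - deriv S x)
    (g' := fun x ↦ 3 * x ^ 2) ?_ ?_ ?_ ?_ ?_ hstep
  · filter_upwards [hS'] with x hx using (hasDerivAt_id' x).fun_sub hx
  · filter_upwards with x using by simpa using hasDerivAt_pow 3 x
  · filter_upwards [hpos] with x hx using by positivity
  · simpa using hid.sub hSlim
  · simpa using hid.pow 3

theorem tendsto_f {d : ℝ} (hd : d ≠ 0) (hSlim : Tendsto (fun x ↦ S x / x) (𝓝[>] 0) (𝓝 1))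
    (hcube : Tendsto (fun x ↦ (x - S x) / x ^ 3) (𝓝[>] 0) (𝓝 (-d / 6))) :
    Tendsto (f S) (𝓝[>] 0) (𝓝 (-12 / d)) := by
  have := (hSlim.const_add 1).mul (hcube.inv₀ (by simpa using hd))
  rw [show (1 + 1) * (-d / 6)⁻¹ = -12 / d by field_simp; norm_num] at this
  refine this.congr' ?_
  filter_upwards [self_mem_nhdsWithin] with x (hx : 0 < x)
  unfold f
  field_simp

theorem sq_sub_div_sq_add_lt_of_sq_lt_f (hx : 0 < x) (hSx : S x < x)
    (h : a ^ 2 < f S x) : (a ^ 2 - x ^ 2) / (a ^ 2 + x ^ 2) < S x / x := by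
  have hxS : 0 < x - S x := by linarith
  rw [f, lt_div_iff₀ hxS] at h
  rw [div_lt_div_iff₀ (by positivity) hx]
  nlinarith

theorem div_lt_of_f_lt {d : ℝ} (hd : d < 0) (hx : 0 < x) (hSx : S x < x)
    (h : f S x < -12 / d) : S x / x < (12 + d * x ^ 2) / (12 - d * x ^ 2) := by
  have hxS : 0 < x - S x := by linarith
  have hdx : 0 < 12 - d * x ^ 2 := by nlinarith [sq_nonneg x]
  rw [f, neg_div, ← div_neg, div_lt_div_iff₀ hxS (by linarith)] at h
  rw [div_lt_div_iff₀ hx hdx]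
  nlinarith

end Redheffer

open Redheffer

theorem redheffer_two_sided_general (a : ℝ) (ha : 0 < a) (P : Set ℝ) (hPfin : P.Finite)
    (S : ℝ → ℝ)
    (hS2 : ∀ x ∈ Ioo 0 a, 0 < S x ∧ S x < x)
    (hS3 : ContinuousOn S (Icc 0 a) ∧ ContDiffOn ℝ 1 S (Ico 0 a) ∧
      ContDiffOn ℝ 2 S (Ico 0 a \ P))
    (hS0 : S 0 = 0) (hS'0 : deriv S 0 = 1) (hSa : S a = 0)
    (hS4 : ∀ x ∈ Ico 0 a \ P, (deriv S x) ^ 2 - deriv (deriv S) x * S x ≥ 1)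
    (d : ℝ) (hd : d < 0)
    (hlim : Filter.Tendsto (fun x => deriv (deriv S) x / x)
      (nhdsWithin 0 (Ioi 0)) (nhds d)) :
    a ^ 2 < -12 / d ∧
      ∀ x ∈ Ioo 0 a,
        (a ^ 2 - x ^ 2) / (a ^ 2 + x ^ 2) < S x / x ∧
          S x / x < (12 + d * x ^ 2) / (12 - d * x ^ 2) := by
  obtain ⟨hScont, hC1, hC2⟩ := hS3
  have hS0' : HasDerivAt S 1 0 :=
    hS'0 ▸ (differentiableAt_of_deriv_ne_zero (by simp [hS'0])).hasDerivAt
  have hS' : ∀ x ∈ Ioo 0 a, HasDerivAt S (deriv S x) x := fun x hx ↦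
    ((hC1.contDiffAt (Ico_mem_nhds hx.1 hx.2)).differentiableAt one_ne_zero).hasDerivAt
  have hS'' : ∀ x ∈ Ioo 0 a \ P, HasDerivAt (deriv S) (deriv (deriv S) x) x := fun x hx ↦
    hC2.hasDerivAt_deriv (sdiff_mem (Ico_mem_nhds hx.1.1 hx.1.2)
      (hPfin.isClosed.isOpen_compl.mem_nhds hx.2))
  have hS'cont := hC1.continuousOn_deriv_Ico hS0'.differentiableAt
  have hS'lim : Tendsto (deriv S) (𝓝[>] 0) (𝓝 1) := by
    have := (hS'cont 0 ⟨le_rfl, ha⟩).tendsto.mono_left (nhdsWithin_mono 0 Ioo_subset_Ico_self)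
    rwa [nhdsWithin_Ioo_eq_nhdsGT ha, hS'0] at this
  have hSto0 : Tendsto S (𝓝[>] 0) (𝓝 0) := by
    simpa only [hS0] using (hS0'.continuousAt.continuousWithinAt (s := Ioi 0)).tendsto
  have hSlim := (hS0'.tendsto_div_self hS0).mono_left (nhdsGT_le_nhdsNE 0)
  have hnear : Ioo 0 a \ P ∈ 𝓝[>] 0 :=
    sdiff_mem (Ioo_mem_nhdsGT ha) (nhdsGT_le_nhdsNE 0 (hPfin.compl_mem_nhdsNE 0))
  have hM x (hx : x ∈ Ioo 0 a) : 0 < M S x :=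
    M_pos hPfin hS2 hS' hS'cont hS'' (fun x hx ↦ hS4 x ⟨Ioo_subset_Ico_self hx.1, hx.2⟩)
      hSlim hS'lim hx
  have hanti := strictAntiOn_f hS2 hS' hScont hSa hM
  have hflim := tendsto_f hd.ne hSlim <| tendsto_sub_div_cube
    (mem_of_superset hnear fun x hx ↦ hS' x hx.1) (mem_of_superset hnear hS'') hSto0 hS'lim hlim
  have hf_lt x (hx : x ∈ Ioc 0 a) : f S x < -12 / d :=
    (hanti.mono (Ioc_subset_Ioc_right hx.2)).lt_of_tendsto_nhdsGT hx.1 hflim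
  have hfa : f S a = a ^ 2 := by simp [f, hSa, ha.ne']
  refine ⟨hfa ▸ hf_lt a ⟨ha, le_rfl⟩, fun x hx ↦ ⟨?_, ?_⟩⟩
  · exact sq_sub_div_sq_add_lt_of_sq_lt_f hx.1 (hS2 x hx).2
      (hfa ▸ hanti ⟨hx.1, hx.2.le⟩ ⟨ha, le_rfl⟩ hx.2)
  · exact div_lt_of_f_lt hd hx.1 (hS2 x hx).2 (hf_lt x ⟨hx.1, hx.2.le⟩)

/-- Two-sided Redheffer estimate: under (S2)–(S4) (with `S(0) = 0`, `S'(0) = 1`,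
`S(a) = 0`), if `d = lim_{x→0⁺} S''(x)/x` exists with `−∞ < d < 0`, then
`a² < −12/d` and `(a² − x²)/(a² + x²) < S(x)/x < (12 + dx²)/(12 − dx²)` on `(0,a)`. -/
theorem redheffer_two_sided (a : ℝ) (ha : 0 < a) (P : Set ℝ) (hPfin : P.Finite)
    (hPsub : P ⊆ Ioo 0 a) (S : ℝ → ℝ)
    (hS2 : ∀ x ∈ Ioo 0 a, 0 < S x ∧ S x < x)
    (hS3 : ContinuousOn S (Icc 0 a) ∧ ContDiffOn ℝ 1 S (Ico 0 a) ∧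
      ContDiffOn ℝ 2 S (Ico 0 a \ P))
    (hS0 : S 0 = 0) (hS'0 : deriv S 0 = 1) (hSa : S a = 0)
    (hS4 : ∀ x ∈ Ico 0 a \ P, (deriv S x) ^ 2 - deriv (deriv S) x * S x ≥ 1)
    (d : ℝ) (hd : d < 0)
    (hlim : Filter.Tendsto (fun x => deriv (deriv S) x / x)
      (nhdsWithin 0 (Ioi 0)) (nhds d)) :
    a ^ 2 < -12 / d ∧
      ∀ x ∈ Ioo 0 a,
        (a ^ 2 - x ^ 2) / (a ^ 2 + x ^ 2) < S x / x ∧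
          S x / x < (12 + d * x ^ 2) / (12 - d * x ^ 2) :=
  redheffer_two_sided_general a ha P hPfin S hS2 hS3 hS0 hS'0 hSa hS4 d hd hlim
end
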